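/- arXiv:1201.1774 — 2 statements merged into one kernel-verified Lean document; each statement's English description precedes it below -/
import Mathlib

section
/- Let N ≥ 1, 1 < q < 2, a = (2-q)/(q-1), γ_q = (q-1)^{-a}/(2-q), and η ≥ 0. Then the radial function F(x) = γ_q(|x|-η)^{-a} satisfies -ΔF + |∇F|^q = γ_q · a · (N-1)/|x| · (|x|-η)^{-(a+1)} ≥ 0 at every x ∈ ℝ^N with |x| > η; in particular F is a stationary supersolution of u_t - Δu + |∇u|^q = 0 on {|x| > η}. -/
/-! For a radial function `φ ‖x‖` on `ℝ^N` the gradient is `φ' r • x / r` and the Laplacian is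
`φ'' r + (N - 1) / r * φ' r`. For the profile `φ t = γ_q (t - η)^(-a)` the exponent
`a = (2 - q)/(q - 1)` makes `|φ'|^q` and `φ''` the same power `(t - η)^(-(a + 2))`, and the
normalisation `γ_q` makes their coefficients agree, `(γ_q a)^q = γ_q a (a + 1)`. So in
`-ΔF + |∇F|^q` only the first-order term `-(N - 1)/r * φ' r ≥ 0` survives. -/

open Real Set

noncomputable def lap {N : ℕ} (f : EuclideanSpace ℝ (Fin N) → ℝ)
    (x : EuclideanSpace ℝ (Fin N)) : ℝ :=
  ∑ i : Fin N, fderiv ℝ (fun y => fderiv ℝ f y (EuclideanSpace.single i 1)) x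
    (EuclideanSpace.single i 1)

open Filter Topology

section Radial

variable {E : Type*} [NormedAddCommGroup E] [InnerProductSpace ℝ E]

theorem hasFDerivAt_norm {x : E} (hx : x ≠ 0) :
    HasFDerivAt (fun y : E => ‖y‖) (‖x‖⁻¹ • innerSL ℝ x) x := by
  have hsqrt : HasDerivAt Real.sqrt (1 / (2 * √(‖x‖ ^ 2))) (‖x‖ ^ 2) :=
    Real.hasDerivAt_sqrt (by positivity)
  have h := hsqrt.comp_hasFDerivAt x (hasStrictFDerivAt_norm_sq x).hasFDerivAt
  simp only [Function.comp_def, Real.sqrt_sq (norm_nonneg _)] at h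
  refine h.congr_fderiv ?_
  ext v
  simp only [one_div, mul_inv_rev, smul_apply, coe_innerSL_apply, nsmul_eq_mul, Nat.cast_ofNat,
    smul_eq_mul]
  ring

theorem HasDerivAt.hasFDerivAt_comp_norm {φ : ℝ → ℝ} {φ' : ℝ} {x : E}
    (hφ : HasDerivAt φ φ' ‖x‖) (hx : x ≠ 0) :
    HasFDerivAt (fun y => φ ‖y‖) ((φ' / ‖x‖) • innerSL ℝ x) x := by
  refine (hφ.comp_hasFDerivAt x (hasFDerivAt_norm hx)).congr_fderiv ?_
  rw [smul_smul, div_eq_mul_inv]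

theorem HasDerivAt.norm_gradient_comp_norm [CompleteSpace E] {φ : ℝ → ℝ} {φ' : ℝ} {x : E}
    (hφ : HasDerivAt φ φ' ‖x‖) (hx : x ≠ 0) :
    ‖gradient (fun y => φ ‖y‖) x‖ = |φ'| := by
  have hgrad : HasGradientAt (fun y => φ ‖y‖) ((φ' / ‖x‖) • x) x := by
    rw [hasGradientAt_iff_hasFDerivAt]
    refine (hφ.hasFDerivAt_comp_norm hx).congr_fderiv ?_
    ext v
    simp
  rw [hgrad.gradient, norm_smul, Real.norm_eq_abs, abs_div, abs_norm,
    div_mul_cancel₀ _ (norm_ne_zero_iff.mpr hx)]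

end Radial

theorem lap_comp_norm {N : ℕ} {φ φ' : ℝ → ℝ} {φ'' : ℝ} {x : EuclideanSpace ℝ (Fin N)}
    (hx : x ≠ 0) (hφ : ∀ᶠ t in 𝓝 ‖x‖, HasDerivAt φ (φ' t) t)
    (hφ' : HasDerivAt φ' φ'' ‖x‖) :
    lap (fun y => φ ‖y‖) x = φ'' + (N - 1) / ‖x‖ * φ' ‖x‖ := by
  set r := ‖x‖ with hr
  have hr0 : r ≠ 0 := norm_ne_zero_iff.mpr hx
  have hK : HasDerivAt (fun t => φ' t / t) ((φ'' * r - φ' r) / r ^ 2) r := by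
    simpa only [mul_one] using hφ'.fun_div (hasDerivAt_id' r) hr0
  have hpartial (i : Fin N) : (fun y => fderiv ℝ (fun y => φ ‖y‖) y (EuclideanSpace.single i 1))
      =ᶠ[𝓝 x] fun y => φ' ‖y‖ / ‖y‖ * y i := by
    filter_upwards [continuous_norm.continuousAt.eventually hφ,
      continuousAt_id.eventually_ne hx] with y hy hy0
    rw [(hy.hasFDerivAt_comp_norm hy0).fderiv]
    simp [EuclideanSpace.inner_single_right, mul_comm]
  have hsecond (i : Fin N) :
      fderiv ℝ (fun y => fderiv ℝ (fun y => φ ‖y‖) y (EuclideanSpace.single i 1)) x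
        (EuclideanSpace.single i 1)
        = (φ'' * r - φ' r) / r ^ 2 / r * (x i * x i) + φ' r / r := by
    have h : HasFDerivAt (fun y : EuclideanSpace ℝ (Fin N) => φ' ‖y‖ / ‖y‖ * y i) _ x :=
      (hK.hasFDerivAt_comp_norm hx).mul (EuclideanSpace.proj (𝕜 := ℝ) i).hasFDerivAt
    rw [(hpartial i).fderiv_eq, h.fderiv]
    simp only [PiLp.proj_apply, mul_one, add_apply, smul_apply, PiLp.single_eq_same, smul_eq_mul,
      coe_innerSL_apply, EuclideanSpace.inner_single_right, ringHom_apply, one_mul]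
    ring
  have hsum : ∑ i : Fin N, x i * x i = r ^ 2 := by
    rw [hr, EuclideanSpace.real_norm_sq_eq]
    simp only [sq]
  rw [lap]
  simp only [hsecond]
  rw [Finset.sum_add_distrib, Finset.sum_const, ← Finset.mul_sum, hsum, Finset.card_univ,
    Fintype.card_fin, nsmul_eq_mul]
  field_simp
  ring

theorem hasDerivAt_const_mul_sub_rpow (c p : ℝ) {η t : ℝ} (ht : η < t) :
    HasDerivAt (fun s => c * (s - η) ^ p) (c * p * (t - η) ^ (p - 1)) t := by
  have h := ((Real.hasDerivAt_rpow_const (p := p) (Or.inl (sub_pos.mpr ht).ne')).comp t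
    ((hasDerivAt_id t).sub_const η)).const_mul c
  simpa [mul_assoc] using h

theorem add_one_mul_eq_add_two {q a : ℝ} (hq : q ≠ 1) (ha : a = (2 - q) / (q - 1)) :
    (a + 1) * q = a + 2 := by
  rw [ha]
  field_simp [sub_ne_zero.mpr hq]
  ring

theorem mul_rpow_eq_mul_add_one {q a γ : ℝ} (hq1 : 1 < q) (hq2 : q ≠ 2)
    (ha : a = (2 - q) / (q - 1)) (hγ : γ = (q - 1) ^ (-a) / (2 - q)) :
    (γ * a) ^ q = γ * a * (a + 1) := by
  have hq : 0 < q - 1 := sub_pos.mpr hq1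
  have ha1 : a + 1 = (q - 1)⁻¹ := by
    rw [ha]
    field_simp
    ring
  have hγa : γ * a = (q - 1) ^ (-(a + 1)) := by
    rw [neg_add', Real.rpow_sub_one hq.ne', hγ, ha]
    field_simp [sub_ne_zero.mpr hq2.symm]
  rw [hγa, ← Real.rpow_mul hq.le, neg_mul, add_one_mul_eq_add_two hq1.ne' ha,
    show a + 2 = a + 1 + 1 by ring, neg_add', Real.rpow_sub_one hq.ne', ha1, div_eq_mul_inv]

/-- `F x = γ_q (‖x‖-η)^{-a}` satisfies
`-ΔF + |∇F|^q = γ_q a (N-1)/‖x‖ (‖x‖-η)^{-(a+1)} ≥ 0` on `{‖x‖ > η}`;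
in particular it is a stationary supersolution there. -/
theorem stmt1 (N : ℕ) (hN : 1 ≤ N) (q : ℝ) (hq1 : 1 < q) (hq2 : q < 2)
    (a γq η : ℝ) (ha : a = (2 - q) / (q - 1))
    (hγ : γq = (q - 1) ^ (-a) / (2 - q)) (hη : 0 ≤ η)
    (F : EuclideanSpace ℝ (Fin N) → ℝ) (hF : ∀ x, F x = γq * (‖x‖ - η) ^ (-a)) :
    ∀ x : EuclideanSpace ℝ (Fin N), η < ‖x‖ →
      -(lap F x) + ‖gradient F x‖ ^ q
          = γq * a * (((N : ℝ) - 1) / ‖x‖) * (‖x‖ - η) ^ (-(a + 1))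
        ∧ 0 ≤ -(lap F x) + ‖gradient F x‖ ^ q := by
  intro x hx
  have ha0 : 0 < a := ha ▸ div_pos (by linarith) (by linarith)
  have hγ0 : 0 < γq := hγ ▸ div_pos (Real.rpow_pos_of_pos (by linarith) _) (by linarith)
  have hx0 : x ≠ 0 := norm_pos_iff.mp (hη.trans_lt hx)
  have hs : 0 < ‖x‖ - η := sub_pos.mpr hx
  set φ : ℝ → ℝ := fun t => γq * (t - η) ^ (-a)
  have hFφ : F = fun y => φ ‖y‖ := funext hF
  have hφ : ∀ᶠ t in 𝓝 ‖x‖, HasDerivAt φ (γq * -a * (t - η) ^ (-a - 1)) t :=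
    (lt_mem_nhds hx).mono fun t ht => hasDerivAt_const_mul_sub_rpow _ _ ht
  have hlap := lap_comp_norm hx0 hφ (hasDerivAt_const_mul_sub_rpow (γq * -a) (-a - 1) hx)
  have hgrad := hφ.self_of_nhds.norm_gradient_comp_norm hx0
  rw [← hFφ] at hlap hgrad
  rw [show -a - 1 - 1 = -(a + 1) * q by rw [neg_mul, add_one_mul_eq_add_two hq1.ne' ha]; ring]
    at hlap
  rw [← neg_add'] at hlap hgrad
  have hpow : ‖gradient F x‖ ^ q = γq * a * (a + 1) * (‖x‖ - η) ^ (-(a + 1) * q) := by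
    rw [hgrad, mul_neg, neg_mul, abs_neg, abs_of_pos (by positivity),
      Real.mul_rpow (by positivity) (by positivity), ← Real.rpow_mul hs.le,
      mul_rpow_eq_mul_add_one hq1 hq2.ne ha hγ]
  have key : -lap F x + ‖gradient F x‖ ^ q
      = γq * a * (((N : ℝ) - 1) / ‖x‖) * (‖x‖ - η) ^ (-(a + 1)) := by
    rw [hlap, hpow]
    ring
  have hN1 : (0 : ℝ) ≤ N - 1 := sub_nonneg.mpr (Nat.one_le_cast.mpr hN)
  exact ⟨key, key ▸ mul_nonneg (mul_nonneg (by positivity) (div_nonneg hN1 (norm_nonneg x)))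
    (by positivity)⟩
end

section
/- Let q > 1, and let b : Ω → ℝ be a C² function and A, K, k > 0 constants such that on Ω: 0 < b ≤ A, k ≤ |∇b| ≤ 1, and |Δb| ≤ K. Set C > 0 with C^{q-1} = k^{-q}(Kπ/2 + A/(q-1)) and J(t) = C(arctan t)^{-1/(q-1)} for t > 0. Then w(x,t) = J(t)b(x) satisfies w_t - Δw + |∇w|^q ≥ 0 pointwise in Ω × (0,∞). -/
open Real Set

/-!
With `a = arctan t`, `p = -1/(q-1)` and `D = C a^(p-1)`, the profile `J = C a^p` satisfies
`J = D a`, `J' = -D / ((q-1)(1+t²))` and `J^q = D C^(q-1)` (because `p q = p - 1`). Since `Δ` and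
`∇` commute with constant factors,
`w_t - Δw + |∇w|^q = D (C^(q-1) |∇b|^q - a Δb - b / ((q-1)(1+t²)))`,
and the bracket is nonnegative: `C^(q-1) |∇b|^q ≥ C^(q-1) k^q = Kπ/2 + A/(q-1)`, while
`a Δb ≤ Kπ/2` and `b / (1+t²) ≤ A`.
-/

lemma fderiv_const_mul_field {E : Type*} [NormedAddCommGroup E] [NormedSpace ℝ E]
    (c : ℝ) (f : E → ℝ) : fderiv ℝ (fun y => c * f y) = c • fderiv ℝ f :=
  fderiv_const_smul_field (f := f) c

lemma gradient_const_mul_field {E : Type*} [NormedAddCommGroup E] [InnerProductSpace ℝ E]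
    [CompleteSpace E] (c : ℝ) (f : E → ℝ) (x : E) :
    gradient (fun y => c * f y) x = c • gradient f x := by
  simp [gradient, fderiv_const_mul_field]

lemma lap_const_mul {N : ℕ} (c : ℝ) (f : EuclideanSpace ℝ (Fin N) → ℝ)
    (x : EuclideanSpace ℝ (Fin N)) : lap (fun y => c * f y) x = c * lap f x := by
  simp [lap, fderiv_const_mul_field, Finset.mul_sum]

lemma hasDerivAt_arctan_rpow {t : ℝ} (ht : 0 < t) (p : ℝ) :
    HasDerivAt (fun s => arctan s ^ p) (p * arctan t ^ (p - 1) / (1 + t ^ 2)) t := by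
  convert (hasDerivAt_arctan t).rpow_const (p := p) (Or.inl (arctan_pos.2 ht).ne') using 1
  ring

lemma mul_rpow_neg_one_div_sub_one_rpow {C a g q : ℝ} (hC : 0 < C) (ha : 0 < a) (hg : 0 ≤ g)
    (hq : q ≠ 1) :
    (C * a ^ (-1 / (q - 1)) * g) ^ q = C ^ (q - 1) * g ^ q * (C * a ^ (-1 / (q - 1) - 1)) := by
  have hexp : -1 / (q - 1) * q = -1 / (q - 1) - 1 := by
    field_simp [sub_ne_zero.2 hq]
    ring
  rw [mul_rpow (by positivity) hg, mul_rpow hC.le (by positivity), ← rpow_mul ha.le, hexp,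
    rpow_sub_one hC.ne']
  field_simp

lemma arctan_supersolution_bracket_nonneg {q A K k C a s β L g : ℝ} (hq : 1 < q) (hk : 0 < k)
    (hC : 0 ≤ C) (hCq : C ^ (q - 1) = k ^ (-q) * (K * π / 2 + A / (q - 1)))
    (ha₀ : 0 ≤ a) (ha : a ≤ π / 2) (hs : s ≤ 1) (hβ₀ : 0 ≤ β) (hβ : β ≤ A)
    (hL : |L| ≤ K) (hg : k ≤ g) :
    a * L + s * β / (q - 1) ≤ C ^ (q - 1) * g ^ q := by
  have hCk : C ^ (q - 1) * k ^ q = K * π / 2 + A / (q - 1) := by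
    rw [hCq, mul_right_comm, ← rpow_add hk, neg_add_cancel, rpow_zero, one_mul]
  have hdiff : a * L ≤ K * π / 2 :=
    calc a * L ≤ a * |L| := mul_le_mul_of_nonneg_left (le_abs_self L) ha₀
      _ ≤ π / 2 * K := mul_le_mul ha hL (abs_nonneg L) (by positivity)
      _ = K * π / 2 := by ring
  have hdrift : s * β / (q - 1) ≤ A / (q - 1) :=
    div_le_div_of_nonneg_right ((mul_le_of_le_one_left hβ₀ hs).trans hβ) (by linarith)
  calc a * L + s * β / (q - 1) ≤ C ^ (q - 1) * k ^ q := by linarith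
    _ ≤ C ^ (q - 1) * g ^ q := by gcongr

theorem stmt11_general (N : ℕ) (q : ℝ) (hq : 1 < q)
    (Ω : Set (EuclideanSpace ℝ (Fin N)))
    (b : EuclideanSpace ℝ (Fin N) → ℝ)
    (A K k C : ℝ) (hk : 0 < k)
    (hb1 : ∀ x ∈ Ω, 0 < b x ∧ b x ≤ A)
    (hb2 : ∀ x ∈ Ω, k ≤ ‖gradient b x‖ ∧ ‖gradient b x‖ ≤ 1)
    (hb3 : ∀ x ∈ Ω, |lap b x| ≤ K)
    (hC : 0 < C) (hCq : C ^ (q - 1) = k ^ (-q) * (K * π / 2 + A / (q - 1))) :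
    ∀ x ∈ Ω, ∀ t : ℝ, 0 < t →
      deriv (fun s => C * Real.arctan s ^ (-1 / (q - 1)) * b x) t
          - lap (fun y => C * Real.arctan t ^ (-1 / (q - 1)) * b y) x
          + ‖gradient (fun y => C * Real.arctan t ^ (-1 / (q - 1)) * b y) x‖ ^ q
        ≥ 0 := by
  intro x hx t ht
  set p := -1 / (q - 1)
  set a := arctan t
  have ha : 0 < a := arctan_pos.2 ht
  have hJ : 0 < C * a ^ p := by positivity
  have hD : 0 < C * a ^ (p - 1) := by positivity
  rw [(((hasDerivAt_arctan_rpow ht p).const_mul C).mul_const (b x)).deriv, lap_const_mul,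
    gradient_const_mul_field, norm_smul, norm_of_nonneg hJ.le,
    mul_rpow_neg_one_div_sub_one_rpow hC ha (norm_nonneg _) (by linarith)]
  have hbracket := arctan_supersolution_bracket_nonneg (s := 1 / (1 + t ^ 2)) hq hk hC.le hCq
    ha.le (arctan_lt_pi_div_two t).le (div_le_one_of_le₀ (by nlinarith) (by positivity))
    (hb1 x hx).1.le (hb1 x hx).2 (hb3 x hx) (hb2 x hx).1
  have hsplit : a ^ p = a ^ (p - 1) * a := by rw [← rpow_add_one ha.ne', sub_add_cancel]
  calc _ = C * a ^ (p - 1) * (C ^ (q - 1) * ‖gradient b x‖ ^ q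
        - (a * lap b x + 1 / (1 + t ^ 2) * b x / (q - 1))) := by rw [hsplit]; ring
    _ ≥ 0 := mul_nonneg hD.le (sub_nonneg.2 hbracket)

/-- with `0 < b ≤ A`, `k ≤ |∇b| ≤ 1`, `|Δb| ≤ K` on `Ω`,
`C^{q-1} = k^{-q}(Kπ/2 + A/(q-1))` and `J(t) = C (arctan t)^{-1/(q-1)}`, the function
`w(x,t) = J(t) b(x)` is a supersolution: `w_t - Δw + |∇w|^q ≥ 0` on `Ω × (0,∞)`. -/
theorem stmt11 (N : ℕ) (q : ℝ) (hq : 1 < q)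
    (Ω : Set (EuclideanSpace ℝ (Fin N))) (hΩ : IsOpen Ω)
    (b : EuclideanSpace ℝ (Fin N) → ℝ) (hb : ContDiffOn ℝ 2 b Ω)
    (A K k C : ℝ) (hA : 0 < A) (hK : 0 < K) (hk : 0 < k)
    (hb1 : ∀ x ∈ Ω, 0 < b x ∧ b x ≤ A)
    (hb2 : ∀ x ∈ Ω, k ≤ ‖gradient b x‖ ∧ ‖gradient b x‖ ≤ 1)
    (hb3 : ∀ x ∈ Ω, |lap b x| ≤ K)
    (hC : 0 < C) (hCq : C ^ (q - 1) = k ^ (-q) * (K * π / 2 + A / (q - 1))) :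
    ∀ x ∈ Ω, ∀ t : ℝ, 0 < t →
      deriv (fun s => C * Real.arctan s ^ (-1 / (q - 1)) * b x) t
          - lap (fun y => C * Real.arctan t ^ (-1 / (q - 1)) * b y) x
          + ‖gradient (fun y => C * Real.arctan t ^ (-1 / (q - 1)) * b y) x‖ ^ q
        ≥ 0 :=
  stmt11_general N q hq Ω b A K k C hk hb1 hb2 hb3 hC hCq
end
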